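/- Let n ≥ 1 and let f be drawn uniformly at random from the finite set of polynomials over 𝔽₂ in n variables of degree at most 3 with zero constant term (equivalently, uniformly random degree-3 polynomials f : {0,1}^n → {0,1} over 𝔽₂ satisfying f(0^n) = 0). Then Pr_f[ gap(f)² / 2^{2n} ≥ 1/2^{n+1} ] ≥ 1/12, i.e., Pr_f[ gap(f)² ≥ 2^{n−1} ] ≥ 1/12. (By the amplitude relation |⟨0|^⊗(n+m) C_f^(2) |0⟩^⊗(n+m)| = |gap(f)|/2^{n+m/2} of Lemma 2, this is exactly the content of Lemma 4: Pr_f[ |⟨0|^⊗(n+m) C_f^(2) |0⟩^⊗(n+m)|² ≥ 1/2^{n+m+1} ] ≥ 1/12.) -/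

import Mathlib

/-!
A second-moment argument. Writing `gap f = ∑ₓ (-1)^{f x}` and averaging these characters over the
coefficients, `𝔼[gap(f)^k]` counts the `k`-tuples of points whose vectors of monomial values sum
to zero. For `k = 2` the diagonal pairs give `𝔼[gap²] ≥ 2ⁿ`. For `k = 4` the degree-1 and degree-2
monomials force the four points to coincide in pairs, so `𝔼[gap⁴] ≤ 3 · 2²ⁿ`. The
Paley–Zygmund inequality for `gap²` at half its mean then gives probability at least
`(2ⁿ)² / (4 · 3 · 2²ⁿ) = 1/12`.
-/

open scoped BigOperators

/-- The monomials of a degree-3 polynomial over `𝔽₂` in `n` variables with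
zero constant term: subsets `S` of the variables with `1 ≤ |S| ≤ 3`. -/
abbrev DegThreeMono (n : ℕ) := {S : Finset (Fin n) // 1 ≤ S.card ∧ S.card ≤ 3}

/-- The degree-3 polynomial over `𝔽₂` with zero constant term determined by
the coefficients `c` : `f_c(x) = ∑_S c S ∏_{i∈S} x_i`. -/
def polyFun {n : ℕ} (c : DegThreeMono n → ZMod 2) : (Fin n → ZMod 2) → ZMod 2 :=
  fun x => ∑ S : DegThreeMono n, c S * ∏ i ∈ S.val, x i

/-- `gap(f) = |{x : f(x) = 0}| − |{x : f(x) = 1}|`. -/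
def gap {n : ℕ} (f : (Fin n → ZMod 2) → ZMod 2) : ℤ :=
  ((Finset.univ.filter fun x : Fin n → ZMod 2 => f x = 0).card : ℤ) -
    ((Finset.univ.filter fun x : Fin n → ZMod 2 => f x = 1).card : ℤ)

open Finset

def signChar : AddChar (ZMod 2) ℤ where
  toFun v := if v = 0 then 1 else -1
  map_zero_eq_one' := rfl
  map_add_eq_mul' := by decide

@[simp] lemma signChar_apply (v : ZMod 2) : signChar v = if v = 0 then 1 else -1 := rfl

lemma AddChar.map_sum_eq_prod {ι A M : Type*} [AddCommMonoid A] [CommMonoid M]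
    (ψ : AddChar A M) (s : Finset ι) (a : ι → A) : ψ (∑ i ∈ s, a i) = ∏ i ∈ s, ψ (a i) := by
  induction s using Finset.cons_induction with
  | empty => simp
  | cons i s hi ih => rw [sum_cons, prod_cons, AddChar.map_add_eq_mul, ih]

lemma gap_eq_sum_signChar {n : ℕ} (f : (Fin n → ZMod 2) → ZMod 2) :
    gap f = ∑ x, signChar (f x) := by
  have h : ∀ v : ZMod 2, ¬v = 0 ↔ v = 1 := by decide
  simp [gap, Finset.sum_ite, h, sub_eq_add_neg]

lemma gap_pow_eq_sum_signChar {n : ℕ} (f : (Fin n → ZMod 2) → ZMod 2) (k : ℕ) :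
    gap f ^ k = ∑ x : Fin k → Fin n → ZMod 2, signChar (∑ j, f (x j)) := by
  simp_rw [gap_eq_sum_signChar, Fintype.sum_pow, AddChar.map_sum_eq_prod]

lemma sum_signChar_dotProduct {ι : Type*} [Fintype ι] [DecidableEq ι] (t : ι → ZMod 2) :
    ∑ c : ι → ZMod 2, signChar (c ⬝ᵥ t) = if t = 0 then (Fintype.card (ι → ZMod 2) : ℤ) else 0 := by
  let ψ : AddChar (ι → ZMod 2) ℤ :=
    signChar.compAddMonoidHom (AddMonoidHom.mk' (· ⬝ᵥ t) fun c d => add_dotProduct c d t)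
  have hψ : ψ = 0 ↔ t = 0 := by
    simp only [AddChar.eq_zero_iff, ψ, AddChar.compAddMonoidHom_apply, AddMonoidHom.mk'_apply,
      signChar_apply, ite_eq_left_iff, ← dotProduct_eq_zero_iff, dotProduct_comm t]
    norm_num
  classical
  rw [show ∑ c, signChar (c ⬝ᵥ t) = ∑ c, ψ c from rfl, AddChar.sum_eq_ite ψ]
  simp only [hψ]

lemma ZMod.two_eq_zero_or_eq_one (x : ZMod 2) : x = 0 ∨ x = 1 := by
  revert x; decide

lemma eq_zero_or_eq_zero_or_eq_of_mul_comm {ι : Type*} {u v : ι → ZMod 2}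
    (h : ∀ i j, u i * v j = u j * v i) : u = 0 ∨ v = 0 ∨ u = v := by
  by_cases hu : u = 0
  · exact .inl hu
  obtain ⟨i, hi⟩ := Function.ne_iff.1 hu
  have hui : u i = 1 := (u i).two_eq_zero_or_eq_one.resolve_left hi
  have hv : ∀ j, v j = u j * v i := fun j => by simpa [hui] using h i j
  rcases (v i).two_eq_zero_or_eq_one with hvi | hvi
  · exact .inr <| .inl <| funext fun j => by simp [hv j, hvi]
  · exact .inr <| .inr <| funext fun j => by simp [hv j, hvi]

def monomials {n : ℕ} (x : Fin n → ZMod 2) : DegThreeMono n → ZMod 2 :=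
  fun S => ∏ i ∈ S.val, x i

lemma polyFun_apply {n : ℕ} (c : DegThreeMono n → ZMod 2) (x : Fin n → ZMod 2) :
    polyFun c x = c ⬝ᵥ monomials x := rfl

lemma monomials_apply_singleton {n : ℕ} (x : Fin n → ZMod 2) (i : Fin n) :
    monomials x ⟨{i}, by simp⟩ = x i := by
  simp [monomials]

lemma monomials_apply_pair {n : ℕ} (x : Fin n → ZMod 2) {i j : Fin n} (hij : i ≠ j) :
    monomials x ⟨{i, j}, by simp [card_pair hij]⟩ = x i * x j := by
  simp [monomials, prod_pair hij]

lemma eq_and_eq_of_monomials_add_eq_zero {n : ℕ} {a b c d : Fin n → ZMod 2}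
    (h : monomials a + monomials b + monomials c + monomials d = 0) :
    (a = b ∧ c = d) ∨ (a = c ∧ b = d) ∨ (a = d ∧ b = c) := by
  have hd : ∀ i, d i = a i + b i + c i := fun i => by
    have := congrFun h ⟨{i}, by simp⟩
    simp only [Pi.add_apply, monomials_apply_singleton, Pi.zero_apply] at this
    grind
  -- On degree-2 monomials the relation says that `a + b` and `a + c` have vanishing 2 × 2 minors.
  have hminor : ∀ i j, (a + b) i * (a + c) j = (a + b) j * (a + c) i := by
    intro i j
    rcases eq_or_ne i j with rfl | hij
    · rfl
    have := congrFun h ⟨{i, j}, by simp [card_pair hij]⟩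
    simp only [Pi.add_apply, monomials_apply_pair _ hij, Pi.zero_apply, hd] at this ⊢
    grind
  rcases eq_zero_or_eq_zero_or_eq_of_mul_comm hminor with h0 | h0 | h0 <;>
    [left; (right; left); (right; right)] <;>
    refine ⟨funext fun i => ?_, funext fun i => ?_⟩ <;>
    have := congrFun h0 i <;> have := hd i <;> simp only [Pi.add_apply, Pi.zero_apply] at * <;>
    grind

def monomialNullTuples (n k : ℕ) : Finset (Fin k → Fin n → ZMod 2) :=
  {x | ∑ j, monomials (x j) = 0}

lemma sum_gap_polyFun_pow (n k : ℕ) :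
    ∑ c : DegThreeMono n → ZMod 2, gap (polyFun c) ^ k =
      Fintype.card (DegThreeMono n → ZMod 2) * #(monomialNullTuples n k) := by
  simp_rw [gap_pow_eq_sum_signChar, polyFun_apply]
  rw [sum_comm]
  simp_rw [← dotProduct_sum, sum_signChar_dotProduct]
  simp [sum_ite, monomialNullTuples, mul_comm]

lemma two_pow_le_card_monomialNullTuples_two (n : ℕ) :
    2 ^ n ≤ #(monomialNullTuples n 2) := by
  let diagonal : Finset (Fin 2 → Fin n → ZMod 2) := univ.image fun a => ![a, a]
  have hdiag : diagonal ⊆ monomialNullTuples n 2 := by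
    intro x hx
    obtain ⟨a, -, rfl⟩ := mem_image.1 hx
    simp only [monomialNullTuples, mem_filter, mem_univ, true_and, Fin.sum_univ_two]
    exact funext fun S => CharTwo.add_self_eq_zero (monomials a S)
  calc 2 ^ n = #diagonal := by
        rw [card_image_of_injective _ fun a b h => congrFun h 0]
        simp
    _ ≤ _ := card_le_card hdiag

lemma card_monomialNullTuples_four_le (n : ℕ) :
    #(monomialNullTuples n 4) ≤ 3 * 2 ^ (2 * n) := by
  let pairings : Finset (Fin 4 → Fin n → ZMod 2) :=
    (univ.image fun p : (Fin n → ZMod 2) × (Fin n → ZMod 2) => ![p.1, p.1, p.2, p.2]) ∪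
    (univ.image fun p : (Fin n → ZMod 2) × (Fin n → ZMod 2) => ![p.1, p.2, p.1, p.2]) ∪
    (univ.image fun p : (Fin n → ZMod 2) × (Fin n → ZMod 2) => ![p.1, p.2, p.2, p.1])
  have hsub : monomialNullTuples n 4 ⊆ pairings := by
    intro x hx
    have hx' : x = ![x 0, x 1, x 2, x 3] := funext fun j => by fin_cases j <;> rfl
    simp only [monomialNullTuples, mem_filter, mem_univ, true_and, Fin.sum_univ_four] at hx
    rcases eq_and_eq_of_monomials_add_eq_zero hx with ⟨h1, h2⟩ | ⟨h1, h2⟩ | ⟨h1, h2⟩ <;>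
      rw [hx'] <;> simp [pairings, ← h1, ← h2]
  calc #(monomialNullTuples n 4) ≤ #pairings := card_le_card hsub
    _ ≤ 3 * 2 ^ (2 * n) := by
      have hcard (f : (Fin n → ZMod 2) × (Fin n → ZMod 2) → Fin 4 → Fin n → ZMod 2) :
          #(univ.image f) ≤ 2 ^ (2 * n) :=
        card_image_le.trans_eq (by simp [two_mul, pow_add])
      grw [card_union_le, card_union_le, hcard, hcard, hcard]
      omega

theorem sq_sum_sub_le_card_filter_mul_sum_sq {ι K : Type*} [Field K] [LinearOrder K]
    [IsStrictOrderedRing K] (s : Finset ι) (g : ι → K) {t : K} (ht : 0 ≤ t)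
    (hst : #s * t ≤ ∑ i ∈ s, g i) :
    (∑ i ∈ s, g i - #s * t) ^ 2 ≤ #{i ∈ s | t ≤ g i} * ∑ i ∈ s, g i ^ 2 := by
  have hsmall : ∑ i ∈ s with ¬t ≤ g i, g i ≤ #s * t :=
    calc ∑ i ∈ s with ¬t ≤ g i, g i ≤ #{i ∈ s | ¬t ≤ g i} * t := by
          rw [← nsmul_eq_mul]
          exact sum_le_card_nsmul _ _ _ fun i hi => (not_le.1 (mem_filter.1 hi).2).le
      _ ≤ #s * t := by gcongr; exact filter_subset _ _
  have hlarge : ∑ i ∈ s, g i - #s * t ≤ ∑ i ∈ s with t ≤ g i, g i := by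
    rw [← sum_filter_add_sum_filter_not s (t ≤ g ·)] at hst ⊢
    linarith
  calc (∑ i ∈ s, g i - #s * t) ^ 2 ≤ (∑ i ∈ s with t ≤ g i, g i) ^ 2 := by gcongr
    _ ≤ #{i ∈ s | t ≤ g i} * ∑ i ∈ s with t ≤ g i, g i ^ 2 := sq_sum_le_card_mul_sum_sq
    _ ≤ #{i ∈ s | t ≤ g i} * ∑ i ∈ s, g i ^ 2 := by
        gcongr
        exact filter_subset _ _

theorem card_mul_sq_le_four_mul_card_filter {ι K : Type*} [Field K] [LinearOrder K]
    [IsStrictOrderedRing K] (s : Finset ι) (g : ι → K) {μ M : K} (hμ : 0 ≤ μ)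
    (hmean : #s * μ ≤ ∑ i ∈ s, g i) (hsecond : ∑ i ∈ s, g i ^ 2 ≤ #s * M) :
    #s * μ ^ 2 ≤ 4 * M * #{i ∈ s | μ / 2 ≤ g i} := by
  rcases s.eq_empty_or_nonempty with rfl | hs
  · simp
  have hN : (0 : K) < #s := by exact_mod_cast hs.card_pos
  have hhalf : #s * (μ / 2) ≤ ∑ i ∈ s, g i := le_trans (by gcongr; linarith) hmean
  have hpz := sq_sum_sub_le_card_filter_mul_sum_sq s g (by positivity) hhalf
  have hsq : (#s * (μ / 2)) ^ 2 ≤ #{i ∈ s | μ / 2 ≤ g i} * (#s * M) :=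
    calc (#s * (μ / 2)) ^ 2 ≤ (∑ i ∈ s, g i - #s * (μ / 2)) ^ 2 := by gcongr; linarith
      _ ≤ _ := hpz.trans (by gcongr)
  nlinarith

lemma card_mul_two_pow_le_sum_gap_polyFun_sq (n : ℕ) :
    (Fintype.card (DegThreeMono n → ZMod 2) : ℤ) * 2 ^ n ≤
      ∑ c : DegThreeMono n → ZMod 2, gap (polyFun c) ^ 2 := by
  rw [sum_gap_polyFun_pow]
  gcongr
  exact_mod_cast two_pow_le_card_monomialNullTuples_two n

lemma sum_gap_polyFun_pow_four_le (n : ℕ) :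
    ∑ c : DegThreeMono n → ZMod 2, gap (polyFun c) ^ 4 ≤
      Fintype.card (DegThreeMono n → ZMod 2) * (3 * 2 ^ (2 * n)) := by
  rw [sum_gap_polyFun_pow]
  gcongr
  exact_mod_cast card_monomialNullTuples_four_le n

theorem gap_anticoncentration_general (n : ℕ) :
    (1 : ℚ) / 12 ≤
      ((Finset.univ.filter fun c : DegThreeMono n → ZMod 2 =>
          (1 : ℚ) / 2 ^ (n + 1) ≤ (gap (polyFun c) : ℚ) ^ 2 / 2 ^ (2 * n)).card : ℚ) /
        (Fintype.card (DegThreeMono n → ZMod 2) : ℚ) := by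
  set g : (DegThreeMono n → ZMod 2) → ℚ := fun c => (gap (polyFun c) : ℚ) ^ 2
  have hmean : (#(univ : Finset (DegThreeMono n → ZMod 2)) : ℚ) * 2 ^ n ≤ ∑ c, g c := by
    simp only [g, card_univ]; exact_mod_cast card_mul_two_pow_le_sum_gap_polyFun_sq n
  have hsecond : ∑ c, g c ^ 2 ≤ #(univ : Finset (DegThreeMono n → ZMod 2)) * (3 * 2 ^ (2 * n)) := by
    simp only [g, ← pow_mul, card_univ]; exact_mod_cast sum_gap_polyFun_pow_four_le n
  have hthreshold (c) : 1 / 2 ^ (n + 1) ≤ g c / 2 ^ (2 * n) ↔ 2 ^ n / 2 ≤ g c := by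
    have hscale : (1 : ℚ) / 2 ^ (n + 1) * 2 ^ (2 * n) = 2 ^ n / 2 := by
      rw [pow_succ, two_mul, pow_add]
      field_simp
    rw [le_div_iff₀ (by positivity), hscale]
  have hpz := card_mul_sq_le_four_mul_card_filter univ g (by positivity) hmean hsecond
  simp only [← hthreshold, card_univ, g] at hpz
  rw [le_div_iff₀ (by positivity)]
  have hsq : ((2 : ℚ) ^ n) ^ 2 = 2 ^ (2 * n) := by ring
  nlinarith [pow_pos (two_pos (α := ℚ)) (2 * n)]

/-- For a uniformly random degree-3 polynomial `f` over `𝔽₂` in `n ≥ 1`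
variables with `f(0^n) = 0` (i.e. uniformly random coefficients for the
monomials of degree between 1 and 3),
`Pr_f[ gap(f)²/2^{2n} ≥ 1/2^{n+1} ] ≥ 1/12`. -/
theorem gap_anticoncentration (n : ℕ) (hn : 1 ≤ n) :
    (1 : ℚ) / 12 ≤
      ((Finset.univ.filter fun c : DegThreeMono n → ZMod 2 =>
          (1 : ℚ) / 2 ^ (n + 1) ≤ (gap (polyFun c) : ℚ) ^ 2 / 2 ^ (2 * n)).card : ℚ) /
        (Fintype.card (DegThreeMono n → ZMod 2) : ℚ) :=
  gap_anticoncentration_general n
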